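/- arXiv:1807.02297 — 3 statements merged into one kernel-verified Lean document; each statement's English description precedes it below -/
import Mathlib

section
/- Let G* be the matching output by the greedy algorithm on a capacitated matching instance (which repeatedly selects the maximum-weight feasible edge, where feasibility requires each agent and each incentive to appear in at most one chosen edge and each class ξ to contain at most b_ξ chosen edges). Then for any feasible matching M* of the instance, the total weight of M* is at most 3 times the total weight of G*. -/
open Finset
open scoped Classical

/-- Feasibility for the capacitated matching problem: each agent and each
incentive appears in at most one edge, and each class `k` contributes at most
`b k` edges. -/
def Feasible {A I K : Type*} [DecidableEq A] [DecidableEq I]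
    (cl : A × I → K) (b : K → ℕ) (M : Finset (A × I)) : Prop :=
  (∀ a : A, (M.filter fun e => e.1 = a).card ≤ 1) ∧
  (∀ i : I, (M.filter fun e => e.2 = i).card ≤ 1) ∧
  (∀ k : K, (M.filter fun e => cl e = k).card ≤ b k)

/-- The greedy algorithm: process the edges in the given order (a list sorted
by decreasing weight), adding an edge whenever doing so preserves feasibility
(equivalently: it shares no endpoint with a chosen edge and its class is not
yet saturated). -/
noncomputable def greedy {A I K : Type*} [DecidableEq A] [DecidableEq I]
    (cl : A × I → K) (b : K → ℕ) (l : List (A × I)) : Finset (A × I) :=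
  l.foldl (fun M e => if Feasible cl b (insert e M) then insert e M else M) ∅

/-!
Feasibility is the intersection of three constraints, each of the form "every fibre
of a map `p` holds at most `c` edges" (`p` = agent, incentive, class). An edge `e` of `M` that the
greedy algorithm rejected was blocked by one of them: the fibre of `e` was already full of greedy
edges at least as heavy as `e`; an edge of `M` that greedy accepted blocks itself under the agent
constraint. Within one constraint, each fibre of `M` has at most as many edges as the full fibre of
`G` has heavier edges, so its weight is dominated by that of `G`. Summing over the three
constraints gives the factor 3.
-/

section Greedy

variable {E : Type*} [DecidableEq E] (F : Finset E → Prop)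

noncomputable def greedyFrom (M : Finset E) (l : List E) : Finset E :=
  l.foldl (fun M e => if F (insert e M) then insert e M else M) M

variable {F}

theorem greedyFrom_cons (M : Finset E) (e : E) (l : List E) :
    greedyFrom F M (e :: l) = greedyFrom F (if F (insert e M) then insert e M else M) l :=
  rfl

theorem subset_greedyFrom (M : Finset E) (l : List E) : M ⊆ greedyFrom F M l := by
  induction l generalizing M with
  | nil => exact Subset.refl M
  | cons e l ih =>
    rw [greedyFrom_cons]
    refine Subset.trans ?_ (ih _)
    split_ifs
    exacts [subset_insert e M, Subset.refl M]

theorem greedyFrom_satisfies {M : Finset E} (hM : F M) (l : List E) : F (greedyFrom F M l) := by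
  induction l generalizing M with
  | nil => exact hM
  | cons e l ih =>
    rw [greedyFrom_cons]
    apply ih
    split_ifs with h
    exacts [h, hM]

/-- The output's elements at least as heavy as `e` contain everything that had been chosen when
`e` was rejected. -/
theorem not_insert_heavier_of_notMem_greedyFrom
    (hF : ∀ ⦃S T⦄, S ⊆ T → F T → F S) (w : E → ℝ) {l : List E}
    (hsort : l.Pairwise fun e e' => w e' ≤ w e) {M : Finset E}
    (hheavy : ∀ g ∈ M, ∀ e ∈ l, w e ≤ w g) {e : E} (hel : e ∈ l)
    (heG : e ∉ greedyFrom F M l) :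
    ¬ F (insert e {g ∈ greedyFrom F M l | w e ≤ w g}) := by
  induction l generalizing M with
  | nil => cases hel
  | cons d l ih =>
    obtain ⟨hd, hsort⟩ := List.pairwise_cons.1 hsort
    set M' := if F (insert d M) then insert d M else M with hM'
    rw [greedyFrom_cons] at heG ⊢
    have hM'_sub : M' ⊆ insert d M := by
      rw [hM']
      split_ifs
      exacts [Subset.refl _, subset_insert d M]
    rcases List.mem_cons.1 hel with rfl | hel
    · have hrejected : ¬ F (insert e M) := fun h =>
        heG (subset_greedyFrom M' l (by simp [hM', h]))
      refine fun hins => hrejected (hF (insert_subset_insert e fun g hg => ?_) hins)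
      exact mem_filter.2 ⟨subset_greedyFrom M' l (by simp [hM', hrejected, hg]),
        hheavy g hg e List.mem_cons_self⟩
    · refine ih hsort (fun g hg e' he' => ?_) hel heG
      rcases mem_insert.1 (hM'_sub hg) with rfl | hg
      exacts [hd e' he', hheavy g hg e' (List.mem_cons_of_mem _ he')]

end Greedy

section FiberCap

variable {E α : Type*} [DecidableEq α] (p : E → α) (c : α → ℕ)

def FiberCap (M : Finset E) : Prop :=
  ∀ x, #{e ∈ M | p e = x} ≤ c x

def FiberFull (T : Finset E) (e : E) : Prop :=
  c (p e) ≤ #{g ∈ T | p g = p e}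

variable {p c}

theorem FiberCap.mono {S T : Finset E} (hST : S ⊆ T) (hT : FiberCap p c T) : FiberCap p c S :=
  fun x => (card_le_card (filter_subset_filter _ hST)).trans (hT x)

theorem fiberFull_of_mem {T : Finset E} {e : E} (he : e ∈ T) : FiberFull p (fun _ => 1) T e :=
  card_pos.2 ⟨e, mem_filter.2 ⟨he, rfl⟩⟩

theorem FiberCap.fiberFull_of_not_insert [DecidableEq E] {T : Finset E} {e : E} (hT : FiberCap p c T)
    (h : ¬ FiberCap p c (insert e T)) : FiberFull p c T e := by
  by_contra hlt
  refine h fun x => ?_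
  rw [filter_insert]
  split_ifs with hx
  · subst hx
    exact (card_insert_le _ _).trans (Nat.succ_le_of_lt (not_le.1 hlt))
  · exact hT x

/-- Match the heaviest element of `S` with an element of `T` at least as heavy, and induct. -/
theorem sum_le_sum_of_card_le_card_filter_le [DecidableEq E] {w : E → ℝ} {S T : Finset E}
    (hw : ∀ g ∈ T, 0 ≤ w g) (h : ∀ e ∈ S, #S ≤ #{g ∈ T | w e ≤ w g}) :
    ∑ e ∈ S, w e ≤ ∑ g ∈ T, w g := by
  induction S using Finset.induction_on_max_value w generalizing T with
  | empty => simpa using sum_nonneg hw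
  | insert a S haS hmax ih =>
    obtain ⟨g, hg⟩ : {g ∈ T | w a ≤ w g}.Nonempty :=
      card_pos.1 ((card_pos.2 (insert_nonempty a S)).trans_le (h a (mem_insert_self a S)))
    obtain ⟨hgT, hag⟩ := mem_filter.1 hg
    have hrest : ∑ e ∈ S, w e ≤ ∑ g ∈ T.erase g, w g := by
      refine ih (fun x hx => hw x (mem_of_mem_erase hx)) fun x hx => ?_
      have hgx : g ∈ {g ∈ T | w x ≤ w g} := mem_filter.2 ⟨hgT, (hmax x hx).trans hag⟩
      have := h x (mem_insert_of_mem hx)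
      rw [card_insert_of_notMem haS] at this
      rw [filter_erase, card_erase_of_mem hgx]
      omega
    rw [sum_insert haS, ← add_sum_erase T w hgT]
    exact add_le_add hag hrest

theorem FiberCap.sum_le [DecidableEq E] {w : E → ℝ} {S T : Finset E} (hw : ∀ g ∈ T, 0 ≤ w g)
    (hS : FiberCap p c S) (hfull : ∀ e ∈ S, FiberFull p c {g ∈ T | w e ≤ w g} e) :
    ∑ e ∈ S, w e ≤ ∑ g ∈ T, w g :=
  calc ∑ e ∈ S, w e = ∑ x ∈ S.image p, ∑ e ∈ S with p e = x, w e :=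
        (sum_fiberwise_of_maps_to (fun e he => mem_image_of_mem p he) w).symm
    _ ≤ ∑ x ∈ S.image p, ∑ g ∈ T with p g = x, w g := by
        refine sum_le_sum fun x _ => sum_le_sum_of_card_le_card_filter_le
          (fun g hg => hw g (mem_filter.1 hg).1) fun e he => ?_
        obtain ⟨heS, rfl⟩ := mem_filter.1 he
        rw [filter_comm]
        exact (hS (p e)).trans (hfull e heS)
    _ ≤ ∑ g ∈ T, w g :=
        sum_fiberwise_le_sum_of_sum_fiber_nonneg fun _ _ =>
          sum_nonneg fun g hg => hw g (mem_filter.1 hg).1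

end FiberCap

section Matching

variable {A I K : Type*} [DecidableEq A] [DecidableEq I] {cl : A × I → K} {b : K → ℕ}

theorem feasible_iff {M : Finset (A × I)} :
    Feasible cl b M ↔
      FiberCap Prod.fst (fun _ => 1) M ∧ FiberCap Prod.snd (fun _ => 1) M ∧ FiberCap cl b M :=
  Iff.rfl

theorem feasible_empty : Feasible cl b ∅ := by
  simp [Feasible]

theorem Feasible.mono {S T : Finset (A × I)} (hST : S ⊆ T) (hT : Feasible cl b T) :
    Feasible cl b S :=
  let ⟨h₁, h₂, h₃⟩ := feasible_iff.1 hT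
  feasible_iff.2 ⟨h₁.mono hST, h₂.mono hST, h₃.mono hST⟩

theorem Feasible.fiberFull_of_not_insert {T : Finset (A × I)} {e : A × I}
    (hT : Feasible cl b T) (h : ¬ Feasible cl b (insert e T)) :
    FiberFull Prod.fst (fun _ => 1) T e ∨ FiberFull Prod.snd (fun _ => 1) T e ∨
      FiberFull cl b T e := by
  obtain ⟨h₁, h₂, h₃⟩ := feasible_iff.1 hT
  by_cases h₁' : FiberCap Prod.fst (fun _ => 1) (insert e T)
  · by_cases h₂' : FiberCap Prod.snd (fun _ => 1) (insert e T)
    · exact Or.inr (Or.inr (h₃.fiberFull_of_not_insert fun h₃' => h ⟨h₁', h₂', h₃'⟩))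
    · exact Or.inr (Or.inl (h₂.fiberFull_of_not_insert h₂'))
  · exact Or.inl (h₁.fiberFull_of_not_insert h₁')

end Matching

theorem sum_le_sum_filter_add_sum_filter_add_sum_filter {E : Type*} {s : Finset E} {w : E → ℝ}
    (hw : ∀ e ∈ s, 0 ≤ w e) {P Q R : E → Prop} (h : ∀ e ∈ s, P e ∨ Q e ∨ R e) :
    ∑ e ∈ s, w e ≤ ∑ e ∈ s with P e, w e + ∑ e ∈ s with Q e, w e + ∑ e ∈ s with R e, w e := by
  simp only [sum_filter, ← sum_add_distrib]
  refine sum_le_sum fun e he => ?_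
  have := hw e he
  rcases h e he with h | h | h <;> split_ifs <;> linarith

theorem greedy_one_third_approx_general {A I K : Type*}
    [DecidableEq A] [DecidableEq I]
    (w : A × I → ℝ) (hw : ∀ e, 0 ≤ w e)
    (cl : A × I → K) (b : K → ℕ)
    (l : List (A × I)) (hall : ∀ e : A × I, e ∈ l)
    (hsort : l.Pairwise fun e e' => w e' ≤ w e)
    (M : Finset (A × I)) (hM : Feasible cl b M) :
    ∑ e ∈ M, w e ≤ 3 * ∑ e ∈ greedy cl b l, w e := by
  set G := greedy cl b l
  have hG : Feasible cl b G := greedyFrom_satisfies feasible_empty l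
  have hcover : ∀ e ∈ M,
      FiberFull Prod.fst (fun _ => 1) {g ∈ G | w e ≤ w g} e ∨
      FiberFull Prod.snd (fun _ => 1) {g ∈ G | w e ≤ w g} e ∨
      FiberFull cl b {g ∈ G | w e ≤ w g} e := by
    intro e _
    by_cases heG : e ∈ G
    · exact Or.inl (fiberFull_of_mem (mem_filter.2 ⟨heG, le_rfl⟩))
    · exact (hG.mono (filter_subset _ G)).fiberFull_of_not_insert
        (not_insert_heavier_of_notMem_greedyFrom (fun _ _ => Feasible.mono) w hsort
          (by simp) (hall e) heG)
  obtain ⟨h₁, h₂, h₃⟩ := feasible_iff.1 hM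
  have hwG : ∀ g ∈ G, 0 ≤ w g := fun g _ => hw g
  calc ∑ e ∈ M, w e ≤ _ := sum_le_sum_filter_add_sum_filter_add_sum_filter (fun e _ => hw e) hcover
    _ ≤ ∑ g ∈ G, w g + ∑ g ∈ G, w g + ∑ g ∈ G, w g := by
        refine add_le_add (add_le_add ?_ ?_) ?_
        · exact (h₁.mono (filter_subset _ M)).sum_le hwG fun e he => (mem_filter.1 he).2
        · exact (h₂.mono (filter_subset _ M)).sum_le hwG fun e he => (mem_filter.1 he).2
        · exact (h₃.mono (filter_subset _ M)).sum_le hwG fun e he => (mem_filter.1 he).2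
    _ = 3 * ∑ g ∈ G, w g := by ring

/-- The greedy capacitated matching is a 1/3-approximation: for any feasible
matching `M*`, `Σ_{M*} w ≤ 3 Σ_{G*} w` where `G*` is the greedy output on the
edges sorted in decreasing order of weight. -/
theorem greedy_one_third_approx {A I K : Type*} [Fintype A] [Fintype I]
    [DecidableEq A] [DecidableEq I]
    (w : A × I → ℝ) (hw : ∀ e, 0 ≤ w e)
    (cl : A × I → K) (b : K → ℕ)
    (l : List (A × I)) (hnd : l.Nodup) (hall : ∀ e : A × I, e ∈ l)
    (hsort : l.Pairwise fun e e' => w e' ≤ w e)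
    (M : Finset (A × I)) (hM : Feasible cl b M) :
    ∑ e ∈ M, w e ≤ 3 * ∑ e ∈ greedy cl b l, w e :=
  greedy_one_third_approx_general w hw cl b l hall hsort M hM
end

section
/- In the charging argument for the greedy capacitated matching: if an edge (a,i) ∈ M* of class ξ is removed by the greedy algorithm because the capacity b_ξ of its class was already saturated, then w(a,i) ≤ (1/b_ξ) · Σ_{(a',i') ∈ G* ∩ ξ} w(a',i'). Consequently, summing over all such edges of M*, their total weight is at most Σ_{e ∈ G*} w(e). -/
/-!
The edges of class `ξ` in the greedy output are `b_ξ` edges each at least as heavy as the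
removed edge, so the removed edge weighs at most their average. A feasible `M` has at most
`b_ξ` edges of class `ξ`, so the removed edges of class `ξ` weigh at most `b_ξ` times that
average, i.e. at most the greedy weight of class `ξ`; summing over classes gives the bound.
-/

open Finset
open scoped Classical

lemma le_one_div_card_mul_sum {α : Type*} {s : Finset α} {f : α → ℝ} {x : ℝ}
    (hs : s.Nonempty) (h : ∀ y ∈ s, x ≤ f y) :
    x ≤ (1 / (#s : ℝ)) * ∑ y ∈ s, f y := by
  have hcard : (0 : ℝ) < #s := by exact_mod_cast hs.card_pos
  rw [one_div, inv_mul_eq_div, le_div_iff₀ hcard, mul_comm, ← nsmul_eq_mul]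
  exact card_nsmul_le_sum s f x h

lemma sum_le_of_card_le_of_le_one_div_mul {α : Type*} {s : Finset α} {f : α → ℝ}
    {n : ℕ} {T : ℝ} (hT : 0 ≤ T) (hcard : #s ≤ n)
    (h : ∀ y ∈ s, f y ≤ (1 / (n : ℝ)) * T) :
    ∑ y ∈ s, f y ≤ T := by
  rcases Nat.eq_zero_or_pos n with rfl | hn
  · simp [card_eq_zero.mp (Nat.le_zero.mp hcard), hT]
  calc ∑ y ∈ s, f y ≤ #s • ((1 / (n : ℝ)) * T) := sum_le_card_nsmul s f _ h
    _ ≤ (n : ℝ) * ((1 / (n : ℝ)) * T) := by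
        rw [nsmul_eq_mul]
        gcongr
    _ = T := by field_simp

lemma sum_le_sum_of_sum_fiber_le {α K : Type*} [DecidableEq K] {cl : α → K} {s t : Finset α}
    {f : α → ℝ} (hf : ∀ y ∈ t, 0 ≤ f y)
    (h : ∀ k, ∑ y ∈ s with cl y = k, f y ≤ ∑ y ∈ t with cl y = k, f y) :
    ∑ y ∈ s, f y ≤ ∑ y ∈ t, f y :=
  calc ∑ y ∈ s, f y = ∑ k ∈ s.image cl, ∑ y ∈ s with cl y = k, f y :=
        (sum_fiberwise_of_maps_to (fun _ hy => mem_image_of_mem cl hy) f).symm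
    _ ≤ ∑ k ∈ s.image cl, ∑ y ∈ t with cl y = k, f y := sum_le_sum fun k _ => h k
    _ = ∑ y ∈ t with cl y ∈ s.image cl, f y := sum_fiberwise_eq_sum_filter _ _ _ _
    _ ≤ ∑ y ∈ t, f y :=
        sum_le_sum_of_subset_of_nonneg (filter_subset _ _) fun y hy _ => hf y hy

lemma Feasible.card_filter_le_of_subset {A I K : Type*} [DecidableEq A] [DecidableEq I]
    [DecidableEq K]
    {cl : A × I → K} {b : K → ℕ} {M M₂ : Finset (A × I)} (hM : Feasible cl b M)
    (hM₂ : M₂ ⊆ M) (k : K) : #{e ∈ M₂ | cl e = k} ≤ b k :=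
  Nat.le_trans (card_le_card (filter_subset_filter _ hM₂)) (by convert hM.2.2 k using 2; congr!)

theorem greedy_class_charging_general {A I K : Type*}
    [DecidableEq A] [DecidableEq I] [DecidableEq K]
    (w : A × I → ℝ) (hw : ∀ e, 0 ≤ w e)
    (cl : A × I → K) (b : K → ℕ)
    (l : List (A × I))
    (M : Finset (A × I)) (hM : Feasible cl b M)
    (M₂ : Finset (A × I)) (hM₂ : M₂ ⊆ M)
    (hb : ∀ e ∈ M₂, 0 < b (cl e))
    (hsat : ∀ e ∈ M₂,
      ((greedy cl b l).filter fun e' => cl e' = cl e).card = b (cl e) ∧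
      ∀ e' ∈ greedy cl b l, cl e' = cl e → w e ≤ w e') :
    (∀ e ∈ M₂, w e ≤ (1 / (b (cl e) : ℝ)) *
        ∑ e' ∈ (greedy cl b l).filter fun e' => cl e' = cl e, w e') ∧
    ∑ e ∈ M₂, w e ≤ ∑ e ∈ greedy cl b l, w e := by
  have hcharge : ∀ e ∈ M₂, w e ≤ (1 / (b (cl e) : ℝ)) *
      ∑ e' ∈ (greedy cl b l).filter fun e' => cl e' = cl e, w e' := by
    intro e he
    obtain ⟨hcard, hheavier⟩ := hsat e he
    rw [← hcard]
    refine le_one_div_card_mul_sum (card_pos.mp (hcard ▸ hb e he)) fun e' he' => ?_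
    exact hheavier e' (mem_filter.mp he').1 (mem_filter.mp he').2
  refine ⟨hcharge, sum_le_sum_of_sum_fiber_le (cl := cl) (fun e _ => hw e) fun k => ?_⟩
  refine sum_le_of_card_le_of_le_one_div_mul (sum_nonneg fun e _ => hw e)
    (hM.card_filter_le_of_subset hM₂ k) fun e he => ?_
  obtain ⟨heM₂, rfl⟩ := mem_filter.mp he
  exact hcharge e heM₂

/-- Charging argument, class-saturation case.  Let `M₂ ⊆ M` consist of edges of
the feasible matching `M` that were removed because their class was saturated:
the greedy output contains exactly `b (cl e)` edges of class `cl e`, each of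
weight at least `w e`.  Then every `e ∈ M₂` satisfies
`w e ≤ (1/b_{cl e}) Σ_{e' ∈ G* ∩ cl e} w e'`, and summing,
`Σ_{M₂} w ≤ Σ_{G*} w`. -/
theorem greedy_class_charging {A I K : Type*} [Fintype A] [Fintype I]
    [DecidableEq A] [DecidableEq I] [DecidableEq K]
    (w : A × I → ℝ) (hw : ∀ e, 0 ≤ w e)
    (cl : A × I → K) (b : K → ℕ)
    (l : List (A × I)) (hnd : l.Nodup) (hall : ∀ e : A × I, e ∈ l)
    (hsort : l.Pairwise fun e e' => w e' ≤ w e)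
    (M : Finset (A × I)) (hM : Feasible cl b M)
    (M₂ : Finset (A × I)) (hM₂ : M₂ ⊆ M)
    (hb : ∀ e ∈ M₂, 0 < b (cl e))
    (hsat : ∀ e ∈ M₂,
      ((greedy cl b l).filter fun e' => cl e' = cl e).card = b (cl e) ∧
      ∀ e' ∈ greedy cl b l, cl e' = cl e → w e ≤ w e') :
    (∀ e ∈ M₂, w e ≤ (1 / (b (cl e) : ℝ)) *
        ∑ e' ∈ (greedy cl b l).filter fun e' => cl e' = cl e, w e') ∧
    ∑ e ∈ M₂, w e ≤ ∑ e ∈ greedy cl b l, w e :=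
  greedy_class_charging_general w hw cl b l M hM M₂ hM₂ hb hsat
end

section
/- Let G* = {g*_1, ..., g*_m} be the greedy matching on weights w, ordered so that w(g*_1) ≥ ... ≥ w(g*_m), and let L_j be the marginal infeasibility sets (L_1 = H_1 and L_j = H_j \ H_{j-1}, where H_j is the set of edges infeasible when added to {g*_1,...,g*_j}). Then the sets L_1, ..., L_m are pairwise disjoint, their union equals P \ G*, and for every edge (a,i) ∈ L_j one has w(g*_j) ≥ w(a,i). -/
open Finset
open scoped Classical

/-- The greedy algorithm, returning the selected edges as a list in selection
order (decreasing weight). -/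
noncomputable def greedyList {A I K : Type*} [DecidableEq A] [DecidableEq I]
    (cl : A × I → K) (b : K → ℕ) (l : List (A × I)) : List (A × I) :=
  l.foldl (fun M e =>
    if Feasible cl b (insert e M.toFinset) then M ++ [e] else M) []

/-- `infeasibleSet cl b l gl j` is the set `H_j`: edges (not among the first
`j` greedy edges) whose addition to the first `j` greedy edges violates
feasibility. -/
def infeasibleSet {A I K : Type*} [DecidableEq A] [DecidableEq I]
    (cl : A × I → K) (b : K → ℕ) (l : List (A × I)) (gl : List (A × I))
    (j : ℕ) : Set (A × I) :=
  {e | e ∈ l ∧ e ∉ gl.take j ∧ ¬ Feasible cl b (insert e (gl.take j).toFinset)}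

/-! The greedy output is feasible, and every rejected edge was infeasible with the greedy
prefix current at its rejection. Feasibility being hereditary, this makes `H_j` increasing in `j`,
empty for `j = 0` and equal to `P \ G*` for `j = m`, so its successive differences `L_j` partition
`P \ G*`. An edge `e ∈ L_j` is compatible with `g*_1, …, g*_{j-1}`, while the greedy prefix at its
rejection was not; hence that prefix contains `g*_j`, which was therefore scanned before `e` and
weighs at least `w e`. -/

namespace Monotone

variable {α : Type*} {s : ℕ → Set α}

theorem pairwise_disjoint_sdiff_succ (hs : Monotone s) :
    Pairwise fun i j => Disjoint (s (i + 1) \ s i) (s (j + 1) \ s j) := by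
  simp_rw [← hs.disjointed_add_one]
  exact (disjoint_disjointed s).comp_of_injective (add_left_injective 1)

theorem iUnion_fin_sdiff_succ (hs : Monotone s) (m : ℕ) :
    ⋃ j : Fin m, (s (j + 1) \ s j) = s m \ s 0 := by
  ext x
  simp only [Set.mem_iUnion, Set.mem_sdiff]
  constructor
  · rintro ⟨j, hx, hxj⟩
    exact ⟨hs j.2 hx, fun hx0 => hxj (hs (Nat.zero_le j) hx0)⟩
  · rintro ⟨hxm, hx0⟩
    have hex : ∃ n, x ∈ s n := ⟨m, hxm⟩
    obtain ⟨j, hj⟩ := Nat.exists_eq_add_one_of_ne_zero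
      (fun h : Nat.find hex = 0 => hx0 (h ▸ Nat.find_spec hex))
    have hjm : j + 1 ≤ m := hj ▸ Nat.find_min' hex hxm
    exact ⟨⟨j, by omega⟩, hj ▸ Nat.find_spec hex, Nat.find_min hex (show j < _ by omega)⟩

end Monotone

section GreedyMatching

variable {A I K : Type*} [DecidableEq A] [DecidableEq I] {cl : A × I → K} {b : K → ℕ}

theorem Feasible.mono_s3 {M N : Finset (A × I)} (hN : Feasible cl b N) (hMN : M ⊆ N) :
    Feasible cl b M := by
  obtain ⟨hA, hI, hK⟩ := hN
  refine ⟨fun a => le_trans ?_ (hA a), fun i => le_trans ?_ (hI i), fun k => le_trans ?_ (hK k)⟩ <;>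
    exact card_le_card (filter_subset_filter _ hMN)

theorem Feasible.insert_of_subset {e : A × I} {p q : List (A × I)}
    (h : Feasible cl b (insert e q.toFinset)) (hpq : p ⊆ q) : Feasible cl b (insert e p.toFinset) :=
  h.mono_s3 (insert_subset_insert e (Multiset.toFinset_subset.mpr hpq))

theorem feasible_singleton (hb : ∀ k, 1 ≤ b k) (e : A × I) : Feasible cl b {e} := by
  refine ⟨fun a => ?_, fun i => ?_, fun k => le_trans ?_ (hb k)⟩ <;>
    exact (card_le_card (filter_subset _ _)).trans (card_singleton e).le

theorem greedyList_append_singleton (l : List (A × I)) (e : A × I) :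
    greedyList cl b (l ++ [e]) =
      if Feasible cl b (insert e (greedyList cl b l).toFinset) then greedyList cl b l ++ [e]
      else greedyList cl b l := by
  rw [greedyList, List.foldl_append]
  rfl

theorem greedyList_prefix_append (l₁ l₂ : List (A × I)) :
    greedyList cl b l₁ <+: greedyList cl b (l₁ ++ l₂) := by
  induction l₂ using List.reverseRecOn with
  | nil => simp
  | append_singleton l₂ e ih =>
    rw [← List.append_assoc, greedyList_append_singleton]
    split_ifs
    exacts [ih.trans (List.prefix_append _ _), ih]

theorem greedyList_sublist (l : List (A × I)) : (greedyList cl b l).Sublist l := by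
  induction l using List.reverseRecOn with
  | nil => exact List.nil_sublist _
  | append_singleton l e ih =>
    rw [greedyList_append_singleton]
    split_ifs
    exacts [ih.append (List.Sublist.refl _), ih.trans (List.sublist_append_left _ _)]

theorem feasible_greedyList (l : List (A × I)) : Feasible cl b (greedyList cl b l).toFinset := by
  induction l using List.reverseRecOn with
  | nil => exact feasible_empty
  | append_singleton l e ih =>
    rw [greedyList_append_singleton]
    split_ifs with h
    · convert h using 1
      ext
      simp
    · exact ih

theorem not_feasible_insert_greedyList_of_not_mem {l₁ l₂ : List (A × I)} {e : A × I}
    (he : e ∉ greedyList cl b (l₁ ++ e :: l₂)) :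
    ¬ Feasible cl b (insert e (greedyList cl b l₁).toFinset) := by
  intro h
  have hpre := greedyList_prefix_append (cl := cl) (b := b) (l₁ ++ [e]) l₂
  rw [greedyList_append_singleton, if_pos h, List.append_assoc, List.singleton_append] at hpre
  exact he (hpre.subset (by simp))

theorem not_feasible_insert_greedyList {l : List (A × I)} {e : A × I} (hel : e ∈ l)
    (he : e ∉ greedyList cl b l) : ¬ Feasible cl b (insert e (greedyList cl b l).toFinset) := by
  obtain ⟨l₁, l₂, rfl⟩ := List.append_of_mem hel
  exact fun h => not_feasible_insert_greedyList_of_not_mem he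
    (h.insert_of_subset (greedyList_prefix_append l₁ (e :: l₂)).subset)

variable {l : List (A × I)}

theorem mem_infeasibleSet {gl : List (A × I)} {j : ℕ} {e : A × I} :
    e ∈ infeasibleSet cl b l gl j ↔
      e ∈ l ∧ e ∉ gl.take j ∧ ¬ Feasible cl b (insert e (gl.take j).toFinset) :=
  Iff.rfl

theorem infeasibleSet_zero (hb : ∀ k, 1 ≤ b k) (gl : List (A × I)) :
    infeasibleSet cl b l gl 0 = ∅ :=
  Set.eq_empty_of_forall_notMem fun e he => by
    simpa using (mem_infeasibleSet.mp he).2.2 (by simpa using feasible_singleton hb e)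

theorem not_mem_greedyList_of_mem_infeasibleSet {j : ℕ} {e : A × I}
    (he : e ∈ infeasibleSet cl b l (greedyList cl b l) j) : e ∉ greedyList cl b l := fun hg =>
  (mem_infeasibleSet.mp he).2.2 ((feasible_greedyList l).mono_s3 (insert_subset
    (List.mem_toFinset.mpr hg) (Multiset.toFinset_subset.mpr (List.take_subset j _))))

theorem monotone_infeasibleSet_greedyList :
    Monotone (infeasibleSet cl b l (greedyList cl b l)) := by
  refine monotone_nat_of_le_succ fun j e he => ?_
  obtain ⟨hel, -, hinf⟩ := mem_infeasibleSet.mp he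
  have hng := not_mem_greedyList_of_mem_infeasibleSet he
  exact mem_infeasibleSet.mpr ⟨hel, fun h => hng (List.mem_of_mem_take h),
    fun h => hinf (h.insert_of_subset (List.take_prefix_take_left (Nat.le_succ j)).subset)⟩

theorem infeasibleSet_greedyList_length :
    infeasibleSet cl b l (greedyList cl b l) (greedyList cl b l).length =
      {e | e ∈ l ∧ e ∉ greedyList cl b l} := by
  ext e
  simp only [mem_infeasibleSet, List.take_length, Set.mem_ofPred_eq]
  exact ⟨fun ⟨hel, hng, _⟩ => ⟨hel, hng⟩,
    fun ⟨hel, hng⟩ => ⟨hel, hng, not_feasible_insert_greedyList hel hng⟩⟩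

theorem lt_length_greedyList_of_feasible_insert_take {l₁ l₂ : List (A × I)} {e : A × I} {j : ℕ}
    (hl : l = l₁ ++ e :: l₂) (he : e ∉ greedyList cl b l)
    (hfeas : Feasible cl b (insert e ((greedyList cl b l).take j).toFinset)) :
    j < (greedyList cl b l₁).length := by
  subst hl
  by_contra! hj
  have hpre := greedyList_prefix_append (cl := cl) (b := b) l₁ (e :: l₂)
  refine not_feasible_insert_greedyList_of_not_mem he (hfeas.insert_of_subset ?_)
  rw [List.prefix_iff_eq_take.mp hpre]
  exact (List.take_prefix_take_left hj).subset

theorem weight_le_of_mem_sdiff_infeasibleSet {w : A × I → ℝ}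
    (hsort : l.Pairwise fun e e' => w e' ≤ w e) {j : ℕ} (hj : j < (greedyList cl b l).length)
    {e : A × I} (he : e ∈ infeasibleSet cl b l (greedyList cl b l) (j + 1) \
      infeasibleSet cl b l (greedyList cl b l) j) :
    w e ≤ w (greedyList cl b l)[j] := by
  obtain ⟨he₁, he₀⟩ := he
  have hng := not_mem_greedyList_of_mem_infeasibleSet he₁
  have hel := (mem_infeasibleSet.mp he₁).1
  have hfeas : Feasible cl b (insert e ((greedyList cl b l).take j).toFinset) := by
    by_contra h
    exact he₀ (mem_infeasibleSet.mpr ⟨hel, fun ht => hng (List.mem_of_mem_take ht), h⟩)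
  obtain ⟨l₁, l₂, hl⟩ := List.append_of_mem hel
  have hlt := lt_length_greedyList_of_feasible_insert_take hl hng hfeas
  have hpre : greedyList cl b l₁ <+: greedyList cl b l := hl ▸ greedyList_prefix_append l₁ _
  have hg : (greedyList cl b l)[j] ∈ l₁ := by
    rw [← hpre.getElem hlt]
    exact (greedyList_sublist l₁).subset (List.getElem_mem hlt)
  rw [hl, List.pairwise_append] at hsort
  exact hsort.2.2 _ hg e List.mem_cons_self

end GreedyMatching

theorem marginal_infeasibility_sets_general {A I K : Type*} [DecidableEq A] [DecidableEq I]
    (w : A × I → ℝ)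
    (cl : A × I → K) (b : K → ℕ) (hb : ∀ k, 1 ≤ b k)
    (l : List (A × I))
    (hsort : l.Pairwise fun e e' => w e' ≤ w e) :
    let gl := greedyList cl b l
    let H := infeasibleSet cl b l gl
    let L : Fin gl.length → Set (A × I) := fun j => H (j.1 + 1) \ H j.1
    (∀ j j' : Fin gl.length, j ≠ j' → Disjoint (L j) (L j')) ∧
    (⋃ j : Fin gl.length, L j) = {e : A × I | e ∈ l ∧ e ∉ gl} ∧
    (∀ j : Fin gl.length, ∀ e ∈ L j, w e ≤ w (gl.get j)) := by
  dsimp only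
  have hH := monotone_infeasibleSet_greedyList (cl := cl) (b := b) (l := l)
  refine ⟨fun j j' hne => hH.pairwise_disjoint_sdiff_succ (Fin.val_injective.ne hne), ?_,
    fun j e he => by simpa using weight_le_of_mem_sdiff_infeasibleSet hsort j.2 he⟩
  rw [hH.iUnion_fin_sdiff_succ, infeasibleSet_zero hb, Set.sdiff_empty,
    infeasibleSet_greedyList_length]

/-- Properties of the marginal infeasibility sets `L_j = H_j \ H_{j-1}` of the
greedy matching `G* = [g*_1, …, g*_m]` (ordered by decreasing weight): they are
pairwise disjoint, their union is `P \ G*`, and each `e ∈ L_j` has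
`w e ≤ w g*_j`. -/
theorem marginal_infeasibility_sets {A I K : Type*} [Fintype A] [Fintype I]
    [DecidableEq A] [DecidableEq I]
    (w : A × I → ℝ)
    (cl : A × I → K) (b : K → ℕ) (hb : ∀ k, 1 ≤ b k)
    (l : List (A × I)) (hnd : l.Nodup) (hall : ∀ e : A × I, e ∈ l)
    (hsort : l.Pairwise fun e e' => w e' ≤ w e) :
    let gl := greedyList cl b l
    let H := infeasibleSet cl b l gl
    let L : Fin gl.length → Set (A × I) := fun j => H (j.1 + 1) \ H j.1
    (∀ j j' : Fin gl.length, j ≠ j' → Disjoint (L j) (L j')) ∧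
    (⋃ j : Fin gl.length, L j) = {e : A × I | e ∈ l ∧ e ∉ gl} ∧
    (∀ j : Fin gl.length, ∀ e ∈ L j, w e ≤ w (gl.get j)) :=
  marginal_infeasibility_sets_general w cl b hb l hsort
end
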